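/- For the average-weight property function, maximal sets satisfying the level-t condition need not be unique: there exists a weighted graph and a level t with two distinct maximal sets C, D such that every vertex of C (resp. D) has average incident weight within C (resp. D) at least t. -/

import Mathlib

open Finset

noncomputable def avgW {V : Type*} [DecidableEq V] (G : SimpleGraph V)
    [DecidableRel G.Adj] (w : V → V → ℝ) (v : V) (U : Finset V) : ℝ :=
  if (U.filter (G.Adj v)).Nonempty then
    (∑ u ∈ U.filter (G.Adj v), w v u) / (U.filter (G.Adj v)).card
  else 0

/-- The path graph `0 — 1 — 2 — 3` on `Fin 4`. -/
def myG : SimpleGraph (Fin 4) where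
  Adj i j := i.val + 1 = j.val ∨ j.val + 1 = i.val
  symm := ⟨fun _ _ h => h.symm⟩
  loopless := ⟨fun _ h => by omega⟩

instance : DecidableRel myG.Adj := fun _ _ =>
  inferInstanceAs (Decidable (_ ∨ _))

/-- Weights: edge `1—2` has weight `1`, everything else weight `3`. -/
noncomputable def myW : Fin 4 → Fin 4 → ℝ := fun i j =>
  if (i = 1 ∧ j = 2) ∨ (i = 2 ∧ j = 1) then 1 else 3

lemma avgW_eq (v : Fin 4) (U s : Finset (Fin 4)) (h : U.filter (myG.Adj v) = s)
    (hs : s.Nonempty) : avgW myG myW v U = (∑ u ∈ s, myW v u) / s.card := by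
  rw [avgW, h, if_pos hs]

lemma avgW_zero (v : Fin 4) (U : Finset (Fin 4)) (h : U.filter (myG.Adj v) = ∅) :
    avgW myG myW v U = 0 := by
  rw [avgW, h]; simp

lemma C_max (E : Finset (Fin 4)) (hCE : ({0,1} : Finset (Fin 4)) ⊆ E)
    (hE : ∀ v ∈ E, (3:ℝ) ≤ avgW myG myW v E) : E = {0,1} := by
  have h1 : (1 : Fin 4) ∈ E := hCE (by decide)
  have h2 : (2 : Fin 4) ∉ E := by
    intro h2
    have key := hE 2 h2
    by_cases h3 : (3 : Fin 4) ∈ E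
    · rw [avgW_eq 2 E {1,3} ?_ (by decide)] at key
      · simp (config := { decide := true })
          [myW, Finset.sum_pair (show (1:Fin 4) ≠ 3 from by decide)] at key
        norm_num at key
      · ext x; fin_cases x <;> simp [Finset.mem_filter, myG, h1, h3] <;>
          try (intros; decide)
    · rw [avgW_eq 2 E {1} ?_ (by decide)] at key
      · simp (config := { decide := true }) [myW] at key
      · ext x; fin_cases x <;> simp [Finset.mem_filter, myG, h1, h3] <;>
          try (intros; decide)
  have h3 : (3 : Fin 4) ∉ E := by
    intro h3
    have key := hE 3 h3
    rw [avgW_zero 3 E ?_] at key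
    · norm_num at key
    · ext x; fin_cases x <;> simp [Finset.mem_filter, myG, h2] <;>
        try (intros; decide)
  apply subset_antisymm _ hCE
  intro x hx
  fin_cases x <;> simp_all

lemma D_max (E : Finset (Fin 4)) (hDE : ({2,3} : Finset (Fin 4)) ⊆ E)
    (hE : ∀ v ∈ E, (3:ℝ) ≤ avgW myG myW v E) : E = {2,3} := by
  have h2 : (2 : Fin 4) ∈ E := hDE (by decide)
  have h1 : (1 : Fin 4) ∉ E := by
    intro h1
    have key := hE 1 h1
    by_cases h0 : (0 : Fin 4) ∈ E
    · rw [avgW_eq 1 E {0,2} ?_ (by decide)] at key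
      · simp (config := { decide := true })
          [myW, Finset.sum_pair (show (0:Fin 4) ≠ 2 from by decide)] at key
        norm_num at key
      · ext x; fin_cases x <;> simp [Finset.mem_filter, myG, h0, h2] <;>
          try (intros; decide)
    · rw [avgW_eq 1 E {2} ?_ (by decide)] at key
      · simp (config := { decide := true }) [myW] at key
      · ext x; fin_cases x <;> simp [Finset.mem_filter, myG, h0, h2] <;>
          try (intros; decide)
  have h0 : (0 : Fin 4) ∉ E := by
    intro h0
    have key := hE 0 h0
    rw [avgW_zero 0 E ?_] at key
    · norm_num at key
    · ext x; fin_cases x <;> simp [Finset.mem_filter, myG, h1] <;>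
        try (intros; decide)
  apply subset_antisymm _ hDE
  intro x hx
  fin_cases x <;> simp_all

/-- For the average-weight property function, maximal sets satisfying the
level-`t` condition need not be unique: there are a weighted graph, a level `t`
and two distinct maximal sets satisfying the level-`t` condition. -/
theorem avgW_maximal_not_unique :
    ∃ (n : ℕ) (G : SimpleGraph (Fin n)) (_ : DecidableRel G.Adj)
      (w : Fin n → Fin n → ℝ) (t : ℝ) (C D : Finset (Fin n)),
      (∀ u v, 0 ≤ w u v) ∧ C ≠ D ∧
      (∀ v ∈ C, t ≤ avgW G w v C) ∧
      (∀ E : Finset (Fin n), C ⊆ E → (∀ v ∈ E, t ≤ avgW G w v E) → E = C) ∧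
      (∀ v ∈ D, t ≤ avgW G w v D) ∧
      (∀ E : Finset (Fin n), D ⊆ E → (∀ v ∈ E, t ≤ avgW G w v E) → E = D) := by
  refine ⟨4, myG, inferInstance, myW, 3, {0,1}, {2,3}, ?_, by decide, ?_, C_max, ?_, D_max⟩
  · intro u v
    unfold myW
    split <;> norm_num
  · intro v hv
    fin_cases hv
    · rw [avgW_eq 0 {0,1} {1} (by decide) (by decide)]
      simp (config := { decide := true }) [myW]
    · rw [avgW_eq 1 {0,1} {0} (by decide) (by decide)]
      simp (config := { decide := true }) [myW]
  · intro v hv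
    fin_cases hv
    · rw [avgW_eq 2 {2,3} {3} (by decide) (by decide)]
      simp (config := { decide := true }) [myW]
    · rw [avgW_eq 3 {2,3} {2} (by decide) (by decide)]
      simp (config := { decide := true }) [myW]
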